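/- For every natural number N ≥ 1 and all reals θ, φ, the operator S₁' = cos(2θ)·(σz ⊗ I₂^{⊗(N−1)}) + sin(2θ)·(cos φ · σx^{⊗N} + sin φ · σy ⊗ σx^{⊗(N−1)}) stabilizes the state |Ψ_φ^θ⟩ = cos θ |0^N⟩ + e^{iφ} sin θ |1^N⟩, i.e. S₁' |Ψ_φ^θ⟩ = |Ψ_φ^θ⟩. -/

import Mathlib

open Matrix Complex

noncomputable section

/-- Pauli X matrix. -/
def pX : Matrix (Fin 2) (Fin 2) ℂ := !![0, 1; 1, 0]

/-- Pauli Y matrix. -/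
def pY : Matrix (Fin 2) (Fin 2) ℂ := !![0, -Complex.I; Complex.I, 0]

/-- Pauli Z matrix. -/
def pZ : Matrix (Fin 2) (Fin 2) ℂ := !![1, 0; 0, -1]

/-- Kronecker product of a family of single-qubit operators, one for each of the `N` qubits. -/
def tensorVec (N : ℕ) (A : Fin N → Matrix (Fin 2) (Fin 2) ℂ) :
    Matrix (Fin N → Fin 2) (Fin N → Fin 2) ℂ :=
  Matrix.of fun b c => ∏ j, A j (b j) (c j)

/-- N-fold Kronecker (tensor) power of a single-qubit operator. -/
def tensorPow (N : ℕ) (A : Matrix (Fin 2) (Fin 2) ℂ) :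
    Matrix (Fin N → Fin 2) (Fin N → Fin 2) ℂ :=
  tensorVec N fun _ => A

/-- The all-zeros bit string, indexing `|0^N⟩`. -/
def zeros (N : ℕ) : Fin N → Fin 2 := fun _ => 0

/-- The all-ones bit string, indexing `|1^N⟩`. -/
def ones (N : ℕ) : Fin N → Fin 2 := fun _ => 1

/-- The state `|Ψ_φ^θ⟩ = cos θ |0^N⟩ + e^{iφ} sin θ |1^N⟩`. -/
def psiPhiTheta (N : ℕ) (φ θ : ℝ) : (Fin N → Fin 2) → ℂ := fun b =>
  (Real.cos θ : ℂ) * (if b = zeros N then 1 else 0)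
    + Complex.exp (Complex.I * φ) * (Real.sin θ : ℂ) * (if b = ones N then 1 else 0)

/-- The generalized stabilizer
`S₁' = cos(2θ)·σz⊗I^{⊗(N−1)} + sin(2θ)(cos φ·σx^{⊗N} + sin φ·σy⊗σx^{⊗(N−1)})`. -/
def S1' (N : ℕ) (θ φ : ℝ) : Matrix (Fin N → Fin 2) (Fin N → Fin 2) ℂ :=
  ((Real.cos (2 * θ) : ℝ) : ℂ) • tensorVec N (fun j => if (j : ℕ) = 0 then pZ else 1)
    + ((Real.sin (2 * θ) : ℝ) : ℂ) •
        (((Real.cos φ : ℝ) : ℂ) • tensorPow N pX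
          + ((Real.sin φ : ℝ) : ℂ) • tensorVec N (fun j => if (j : ℕ) = 0 then pY else pX))

/-!
The three Pauli strings in `S₁'` map `|0^N⟩` and `|1^N⟩` to multiples of `|1^N⟩` and `|0^N⟩`
(a product operator sends a product basis state to a product basis state, scaled by the product
of the one-qubit scalars). So on the span of `|0^N⟩, |1^N⟩` the operator `S₁'` is the matrix
`[[cos 2θ, e^{-iφ} sin 2θ], [e^{iφ} sin 2θ, -cos 2θ]]`, and `(cos θ, e^{iφ} sin θ)` is its
`+1` eigenvector by the angle-difference formulas `cos (2θ - θ) = cos θ`, `sin (2θ - θ) = sin θ`.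
-/

theorem one_mulVec_single (x : Fin 2) :
    (1 : Matrix (Fin 2) (Fin 2) ℂ) *ᵥ Pi.single x 1 = (1 : ℂ) • Pi.single x 1 := by
  rw [one_mulVec, one_smul]

theorem pZ_mulVec_single_zero : pZ *ᵥ Pi.single 0 1 = (1 : ℂ) • Pi.single 0 1 := by
  ext x; fin_cases x <;> simp [pZ]

theorem pZ_mulVec_single_one : pZ *ᵥ Pi.single 1 1 = (-1 : ℂ) • Pi.single 1 1 := by
  ext x; fin_cases x <;> simp [pZ]

theorem pX_mulVec_single_zero : pX *ᵥ Pi.single 0 1 = (1 : ℂ) • Pi.single 1 1 := by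
  ext x; fin_cases x <;> simp [pX]

theorem pX_mulVec_single_one : pX *ᵥ Pi.single 1 1 = (1 : ℂ) • Pi.single 0 1 := by
  ext x; fin_cases x <;> simp [pX]

theorem pY_mulVec_single_zero : pY *ᵥ Pi.single 0 1 = I • Pi.single 1 1 := by
  ext x; fin_cases x <;> simp [pY]

theorem pY_mulVec_single_one : pY *ᵥ Pi.single 1 1 = (-I) • Pi.single 0 1 := by
  ext x; fin_cases x <;> simp [pY]

theorem tensorVec_mulVec_single {N : ℕ} (A : Fin N → Matrix (Fin 2) (Fin 2) ℂ)
    (c d : Fin N → Fin 2) (μ : Fin N → ℂ)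
    (h : ∀ j, A j *ᵥ Pi.single (c j) 1 = μ j • Pi.single (d j) 1) :
    tensorVec N A *ᵥ Pi.single c 1 = (∏ j, μ j) • Pi.single d 1 := by
  ext b
  have hcol (j : Fin N) : A j (b j) (c j) = μ j * if b j = d j then 1 else 0 := by
    simpa [mulVec_single_one, Pi.single_apply] using congrFun (h j) (b j)
  simp only [mulVec_single_one, col_apply, tensorVec, of_apply, hcol, Finset.prod_mul_distrib,
    Finset.prod_boole, Pi.smul_apply, Pi.single_apply, smul_eq_mul, funext_iff]
  simp

theorem prod_ite_val_eq_zero {M : Type*} [CommMonoid M] {N : ℕ} (hN : 1 ≤ N) (a b : M) :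
    ∏ j : Fin N, (if (j : ℕ) = 0 then a else b) = a * b ^ (N - 1) := by
  obtain ⟨N, rfl⟩ := Nat.exists_eq_add_of_le' hN
  simp [Fin.prod_univ_succ]

theorem tensorVec_ite_mulVec_single {N : ℕ} (hN : 1 ≤ N) {A B : Matrix (Fin 2) (Fin 2) ℂ}
    {c d : Fin 2} {a b : ℂ} (hA : A *ᵥ Pi.single c 1 = a • Pi.single d 1)
    (hB : B *ᵥ Pi.single c 1 = b • Pi.single d 1) :
    tensorVec N (fun j => if (j : ℕ) = 0 then A else B) *ᵥ Pi.single (fun _ => c) 1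
      = (a * b ^ (N - 1)) • Pi.single (fun _ => d) 1 := by
  rw [tensorVec_mulVec_single _ _ _ (fun j => if (j : ℕ) = 0 then a else b) fun j => by
    split_ifs
    exacts [hA, hB], prod_ite_val_eq_zero hN]

theorem tensorPow_mulVec_single {N : ℕ} {A : Matrix (Fin 2) (Fin 2) ℂ} {c d : Fin 2} {a : ℂ}
    (hA : A *ᵥ Pi.single c 1 = a • Pi.single d 1) :
    tensorPow N A *ᵥ Pi.single (fun _ => c) 1 = a ^ N • Pi.single (fun _ => d) 1 := by
  rw [tensorPow, tensorVec_mulVec_single _ _ _ (fun _ => a) fun _ => hA, Finset.prod_const,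
    Finset.card_univ, Fintype.card_fin]

-- Stated with `fun _ => 0` rather than `zeros N`: the index of `Pi.single` is a dependent
-- argument, so `simp` could not unfold `zeros N` there to match the lemmas above.
theorem psiPhiTheta_eq (N : ℕ) (φ θ : ℝ) :
    psiPhiTheta N φ θ = (Real.cos θ : ℂ) • Pi.single (fun _ => 0) 1
      + (exp (φ * I) * Real.sin θ) • Pi.single (fun _ => 1) 1 := by
  ext b
  simp only [psiPhiTheta, Pi.add_apply, Pi.smul_apply, Pi.single_apply, smul_eq_mul, mul_comm I]
  rfl

theorem S1'_stabilizes_psi (N : ℕ) (hN : 1 ≤ N) (θ φ : ℝ) :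
    (S1' N θ φ).mulVec (psiPhiTheta N φ θ) = psiPhiTheta N φ θ := by
  have hcos : (Real.cos (2 * θ) * Real.cos θ + Real.sin (2 * θ) * Real.sin θ : ℂ)
      = Real.cos θ := by
    norm_cast; rw [← Real.cos_sub]; ring_nf
  have hsin : (Real.sin (2 * θ) * Real.cos θ - Real.cos (2 * θ) * Real.sin θ : ℂ)
      = Real.sin θ := by
    norm_cast; rw [← Real.sin_sub]; ring_nf
  have hpyth : (Real.cos φ ^ 2 + Real.sin φ ^ 2 : ℂ) = 1 := by
    exact_mod_cast Real.cos_sq_add_sin_sq φ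
  have hexp : exp (φ * I) = Real.cos φ + Real.sin φ * I := by
    rw [exp_mul_I, ← ofReal_cos, ← ofReal_sin]
  rw [psiPhiTheta_eq, hexp]
  simp only [S1', add_mulVec, smul_mulVec, mulVec_add, mulVec_smul,
    tensorVec_ite_mulVec_single hN pZ_mulVec_single_zero (one_mulVec_single 0),
    tensorVec_ite_mulVec_single hN pZ_mulVec_single_one (one_mulVec_single 1),
    tensorVec_ite_mulVec_single hN pY_mulVec_single_zero pX_mulVec_single_zero,
    tensorVec_ite_mulVec_single hN pY_mulVec_single_one pX_mulVec_single_one,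
    tensorPow_mulVec_single pX_mulVec_single_zero, tensorPow_mulVec_single pX_mulVec_single_one,
    one_pow, mul_one]
  linear_combination (norm := module)
    (hcos + Real.sin (2 * θ) * Real.sin θ * hpyth
        - Real.sin (2 * θ) * Real.sin θ * Real.sin φ ^ 2 * I_sq) •
      Pi.single (fun _ : Fin N => (0 : Fin 2)) (1 : ℂ)
    + ((Real.cos φ + Real.sin φ * I) * hsin) • Pi.single (fun _ : Fin N => (1 : Fin 2)) (1 : ℂ)
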